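/- Let G be a group, H a subgroup, and D an abelian H-invariant subgroup of G (i.e., H normalizes D). If every subgroup S with H ≤ S ≤ G satisfies N_G(S) = S, then H is abnormal in the subgroup HD. -/

import Mathlib

/-!
Write `g ∈ H ⊔ D` as `g = h * d` with `h ∈ H`, `d ∈ D`; then `H^g = H^d`, so it suffices to show
`d ∈ S := ⟨H, H^d⟩`. For `x ∈ H` the commutator `c = ⁅d⁻¹, x⁆` lies in `D`, hence commutes with `d`.
Conjugation by `d` resp. `d⁻¹` sends `x` to `c⁻¹ x` resp. `c x`, and `c x ∈ H^d` to `x` resp.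
`c² x`; all of these lie in `S`, so `d` normalizes `S`, and `S ≥ H` is self-normalizing.
-/

/-- The conjugate subgroup `H^g = g⁻¹Hg`. -/
def conjSub {G : Type*} [Group G] (g : G) (H : Subgroup G) : Subgroup G :=
  H.map (MulAut.conj g⁻¹).toMonoidHom

/-- `H` is abnormal in `G`: `g ∈ ⟨H, H^g⟩` for every `g ∈ G`. -/
def IsAbnormal {G : Type*} [Group G] (H : Subgroup G) : Prop :=
  ∀ g : G, g ∈ H ⊔ conjSub g H

/-- `H` is abnormal in the subgroup `B`: `H ≤ B` and `g ∈ ⟨H, H^g⟩` for every `g ∈ B`. -/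
def IsAbnormalIn {G : Type*} [Group G] (H B : Subgroup G) : Prop :=
  H ≤ B ∧ ∀ g ∈ B, g ∈ H ⊔ conjSub g H

open Subgroup
open scoped commutatorElement

section
variable {G : Type*} [Group G]

theorem mem_conjSub_iff {g x : G} {H : Subgroup G} : x ∈ conjSub g H ↔ g * x * g⁻¹ ∈ H := by
  simp only [conjSub, mem_map, MulEquiv.coe_toMonoidHom, MulAut.conj_apply, inv_inv]
  constructor
  · rintro ⟨y, hy, rfl⟩
    simpa [mul_assoc] using hy
  · exact fun hx => ⟨_, hx, by group⟩

theorem conj_mem_conjSub {g x : G} {H : Subgroup G} (hx : x ∈ H) : g⁻¹ * x * g ∈ conjSub g H := by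
  simpa [mem_conjSub_iff, mul_assoc] using hx

theorem conjSub_mul_left_of_mem {h g : G} {H : Subgroup G} (hh : h ∈ H) :
    conjSub (h * g) H = conjSub g H := by
  ext x
  simp only [mem_conjSub_iff, mul_inv_rev, ← mul_assoc]
  rw [mul_mem_cancel_right (inv_mem hh), mul_assoc h, mul_assoc h, mul_mem_cancel_left hh]

theorem mem_normalizer_of_conj_mem {S : Subgroup G} {g : G} (hfwd : ∀ y ∈ S, g * y * g⁻¹ ∈ S)
    (hbwd : ∀ y ∈ S, g⁻¹ * y * g ∈ S) : g ∈ normalizer (S : Set G) :=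
  mem_normalizer_iff.mpr fun y =>
    ⟨hfwd y, fun hy => by simpa [mul_assoc] using hbwd _ hy⟩

theorem mem_normalizer_sup_conjSub {K : Subgroup G} {d : G}
    (hcomm : ∀ x ∈ K, Commute d ⁅d⁻¹, x⁆) :
    d ∈ normalizer ((K ⊔ conjSub d K : Subgroup G) : Set G) := by
  set S := K ⊔ conjSub d K
  have hK : ∀ x ∈ K, x ∈ S := fun x hx => le_sup_left (a := K) hx
  have hKd : ∀ x ∈ K, d⁻¹ * x * d ∈ S := fun x hx =>
    le_sup_right (b := conjSub d K) (conj_mem_conjSub hx)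
  have hc : ∀ x ∈ K, ⁅d⁻¹, x⁆ ∈ S := fun x hx => by
    simpa [commutatorElement_def] using mul_mem (hKd x hx) (inv_mem (hK x hx))
  have hconj : ∀ x, d⁻¹ * x * d = ⁅d⁻¹, x⁆ * x := fun x => by group
  apply mem_normalizer_of_conj_mem
  · suffices S ≤ S.comap (MulAut.conj d).toMonoidHom from fun y hy => this hy
    refine sup_le (fun x hx => ?_) (map_le_iff_le_comap.mpr fun x hx => ?_)
    · have : d * x * d⁻¹ = ⁅d⁻¹, x⁆⁻¹ * x := by
        rw [eq_inv_mul_iff_mul_eq, ← mul_assoc, ← mul_assoc, ← (hcomm x hx).eq,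
          commutatorElement_def]
        group
      simpa [this] using mul_mem (inv_mem (hc x hx)) (hK x hx)
    · simpa [mul_assoc] using hK x hx
  · suffices S ≤ S.comap (MulAut.conj d⁻¹).toMonoidHom by simpa using fun y hy => this hy
    refine sup_le (fun x hx => by simpa using hKd x hx) (map_le_iff_le_comap.mpr fun x hx => ?_)
    have : d⁻¹ * (d⁻¹ * x * d) * d = ⁅d⁻¹, x⁆ * (⁅d⁻¹, x⁆ * x) := by
      rw [hconj x, ← mul_assoc, (hcomm x hx).inv_left.eq, mul_assoc _ d⁻¹, mul_assoc, hconj x]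
    simpa [this] using mul_mem (hc x hx) (mul_mem (hc x hx) (hK x hx))
end

theorem abnormal_in_join_abelian {G : Type*} [Group G] (H D : Subgroup G)
    (hDab : ∀ x ∈ D, ∀ y ∈ D, x * y = y * x)
    (hinv : ∀ h ∈ H, ∀ d ∈ D, h * d * h⁻¹ ∈ D)
    (hself : ∀ S : Subgroup G, H ≤ S → Subgroup.normalizer (S : Set G) = S) :
    IsAbnormalIn H (H ⊔ D) := by
  refine ⟨le_sup_left, fun g hg => ?_⟩
  have hHD : H ≤ normalizer (D : Set G) := le_normalizer_iff.mpr hinv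
  obtain ⟨h, hh, d, hd, rfl⟩ : ∃ h ∈ H, ∃ d ∈ D, h * d = g := by
    rwa [← SetLike.mem_coe, coe_mul_of_left_le_normalizer_right H D hHD] at hg
  have hcomm : ∀ x ∈ H, Commute d ⁅d⁻¹, x⁆ := fun x hx => hDab d hd _ <|
    le_normalizer_iff_commutator_le_left.mp hHD (commutator_mem_commutator (inv_mem hd) hx)
  have hdS : d ∈ H ⊔ conjSub d H := by
    rw [← hself _ le_sup_left]
    exact mem_normalizer_sup_conjSub hcomm
  rw [conjSub_mul_left_of_mem hh]
  exact mul_mem (le_sup_left (a := H) hh) hdS
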